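/- arXiv:2501.19226 — 15 statements merged into one kernel-verified Lean document; each statement's English description precedes it below -/
import Mathlib

section
/- A poset is a chainmail (every mail-connected subset has a join) if and only if every mail in it has a join. -/
variable {α : Type*}

/-- A mail: a non-empty set of elements having a common lower bound. -/
def IsMail [Preorder α] (M : Set α) : Prop :=
  M.Nonempty ∧ ∃ b, ∀ x ∈ M, b ≤ x

/-- A mail-connected set: non-empty, and any two elements are linked by a
finite sequence in the set in which consecutive elements have a common lower bound. -/
def MailConnected [Preorder α] (M : Set α) : Prop :=
  M.Nonempty ∧ ∀ x ∈ M, ∀ y ∈ M,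
    Relation.ReflTransGen (fun a b => a ∈ M ∧ b ∈ M ∧ ∃ c, c ≤ a ∧ c ≤ b) x y

/-- A poset is a chainmail (every mail-connected subset has a join) if and only if
every mail in it has a join. -/
theorem chainmail_iff_every_mail_has_join [PartialOrder α] :
    (∀ M : Set α, MailConnected M → ∃ j, IsLUB M j) ↔
    (∀ M : Set α, IsMail M → ∃ j, IsLUB M j) := by
  constructor
  · intro h M hM
    obtain ⟨hne, b, hb⟩ := hM
    refine h M ⟨hne, fun x hx y hy => ?_⟩
    exact Relation.ReflTransGen.single ⟨hx, hy, b, hb x hx, hb y hy⟩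
  · intro h M hM
    obtain ⟨⟨x0, hx0⟩, hconn⟩ := hM
    set T : Set α := {t | x0 ≤ t ∧ ∀ u ∈ upperBounds M, t ≤ u} with hT
    have hx0T : x0 ∈ T := ⟨le_refl x0, fun u hu => hu hx0⟩
    obtain ⟨j, hj⟩ := h T ⟨⟨x0, hx0T⟩, x0, fun t ht => ht.1⟩
    -- every x ∈ M is below some element of T
    have key : ∀ x ∈ M, ∃ t ∈ T, x ≤ t := by
      intro x hx
      have := hconn x0 hx0 x hx
      induction this with
      | refl => exact ⟨x0, hx0T, le_refl x0⟩
      | tail hab hstep ih =>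
        obtain ⟨haM, hbM, c, hca, hcb⟩ := hstep
        obtain ⟨t, htT, hat⟩ := ih haM
        -- {t, b} is a mail with lower bound c
        obtain ⟨s, hs⟩ := h {t, _} ⟨⟨t, Or.inl rfl⟩, c, by
          rintro y (rfl | rfl)
          · exact le_trans hca hat
          · exact hcb⟩
        refine ⟨s, ⟨le_trans htT.1 (hs.1 (Or.inl rfl)), fun u hu => ?_⟩,
          hs.1 (Or.inr rfl)⟩
        exact hs.2 (by rintro y (rfl | rfl); exacts [htT.2 u hu, hu hbM])
    refine ⟨j, fun x hx => ?_, fun u hu => ?_⟩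
    · obtain ⟨t, htT, hxt⟩ := key x hx
      exact le_trans hxt (hj.1 htT)
    · exact hj.2 fun t ht => ht.2 u hu
end

section
/- A poset is a chainmail if and only if for every element x, the up-set x^↑ = {y : x ≤ y} is a complete lattice. -/
variable {α : Type*}

/-- Transfer a LUB computed inside the up-set `p^↑` to a genuine LUB in `α`,
for nonempty sets all of whose elements are `≥ p`. -/
private lemma aux_lub [PartialOrder α] {p : α}
    (H : ∀ S : Set {y : α // p ≤ y}, ∃ j, IsLUB S j)
    (S : Set α) (hS : ∀ s ∈ S, p ≤ s) (hne : S.Nonempty) :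
    ∃ j : α, p ≤ j ∧ IsLUB S j := by
  obtain ⟨j', hj'⟩ := H {z | (z : α) ∈ S}
  obtain ⟨s₀, hs₀⟩ := hne
  have hpj : p ≤ (j' : α) :=
    le_trans (hS s₀ hs₀) (hj'.1 (show ((⟨s₀, hS s₀ hs₀⟩ : {y // p ≤ y}) : α) ∈ S from hs₀))
  refine ⟨(j' : α), hpj, ?_, ?_⟩
  · intro s hs
    exact hj'.1 (show ((⟨s, hS s hs⟩ : {y // p ≤ y}) : α) ∈ S from hs)
  · intro u hu
    have hpu : p ≤ u := le_trans (hS s₀ hs₀) (hu hs₀)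
    have : j' ≤ ⟨u, hpu⟩ := hj'.2 (fun z hz => Subtype.coe_le_coe.mp (by exact hu hz))
    exact this

/-- A poset is a chainmail if and only if for every element `x`, the up-set
`x^↑ = {y : x ≤ y}` is a complete lattice (i.e., every subset of it has a least
upper bound within it). -/
theorem chainmail_iff_upSets_completeLattice [PartialOrder α] :
    (∀ M : Set α, MailConnected M → ∃ j, IsLUB M j) ↔
    (∀ x : α, ∀ S : Set {y : α // x ≤ y}, ∃ j, IsLUB S j) := by
  constructor
  · -- chainmail → up-sets complete
    intro h x S
    set M : Set α := insert x ((↑) '' S) with hM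
    have hMx : ∀ m ∈ M, x ≤ m := by
      rintro m (rfl | ⟨s, hs, rfl⟩)
      · exact le_refl _
      · exact s.2
    have hconn : MailConnected M := by
      refine ⟨⟨x, Set.mem_insert _ _⟩, fun a ha b hb => ?_⟩
      exact Relation.ReflTransGen.single ⟨ha, hb, x, hMx a ha, hMx b hb⟩
    obtain ⟨j, hj⟩ := h M hconn
    have hxj : x ≤ j := hj.1 (Set.mem_insert _ _)
    refine ⟨⟨j, hxj⟩, ?_, ?_⟩
    · intro s hs
      exact Subtype.coe_le_coe.mp (hj.1 (Set.mem_insert_of_mem _ ⟨s, hs, rfl⟩))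
    · intro b hb
      refine Subtype.coe_le_coe.mp (hj.2 ?_)
      rintro m (rfl | ⟨s, hs, rfl⟩)
      · exact b.2
      · exact hb hs
  · -- up-sets complete → chainmail
    intro H M hM
    obtain ⟨⟨a, ha⟩, hchain⟩ := hM
    -- binary joins for elements with a common lower bound
    have join2 : ∀ (d b c : α), d ≤ b → d ≤ c → ∃ w, IsLUB {b, c} w := by
      intro d b c hdb hdc
      obtain ⟨w, _, hw⟩ := aux_lub (H d) {b, c}
        (by rintro s (rfl | rfl) <;> assumption) ⟨b, Or.inl rfl⟩
      exact ⟨w, hw⟩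
    set U : Set α := upperBounds M with hU
    set L : Set α := {z | a ≤ z ∧ z ∈ lowerBounds U} with hL
    have haL : a ∈ L := ⟨le_refl a, fun u hu => hu ha⟩
    obtain ⟨j, haj, hjL⟩ := aux_lub (H a) L (fun s hs => hs.1) ⟨a, haL⟩
    have hjlb : j ∈ lowerBounds U := fun u hu => hjL.2 (fun z hz => hz.2 hu)
    have hajj : a ≤ j := hjL.1 haL
    -- every element of M is ≤ j, by chain induction from a
    have hub : ∀ m ∈ M, m ≤ j := by
      intro m hm
      have := hchain a ha m hm
      induction this with
      | refl => exact hajj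
      | tail _ hstep ih =>
        obtain ⟨hxM, hyM, d, hdx, hdy⟩ := hstep
        rename_i x y _
        obtain ⟨w₁, hw₁⟩ := join2 d x y hdx hdy
        have hxw₁ : x ≤ w₁ := hw₁.1 (Or.inl rfl)
        have hxj : x ≤ j := ih hxM
        obtain ⟨w, _, hw⟩ := aux_lub (H x) {j, w₁}
          (by rintro s (rfl | rfl) <;> assumption) ⟨j, Or.inl rfl⟩
        have hwL : w ∈ L := by
          refine ⟨le_trans hajj (hw.1 (Or.inl rfl)), fun u hu => ?_⟩
          refine hw.2 ?_
          rintro s (rfl | rfl)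
          · exact hjlb hu
          · exact hw₁.2 (by rintro t (rfl | rfl); exacts [hu hxM, hu hyM])
        have hwj : w ≤ j := hjL.1 hwL
        exact le_trans (hw₁.1 (Or.inr (Set.mem_singleton _))) (le_trans (hw.1 (Or.inr (Set.mem_singleton _))) hwj)
    exact ⟨j, hub, fun u hu => hjlb hu⟩
end

section
/- A poset is a chainmail if and only if every connected subset has a join, where a subset is connected when it is non-empty and any two of its elements can be linked by a finite sequence within the subset in which consecutive elements are comparable. -/
variable {α : Type*}

/-- A connected set in a poset: non-empty, and any two elements are linked by a
finite sequence in the set in which consecutive elements are comparable. -/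
def PosetConnected [Preorder α] (M : Set α) : Prop :=
  M.Nonempty ∧ ∀ x ∈ M, ∀ y ∈ M,
    Relation.ReflTransGen (fun a b => a ∈ M ∧ b ∈ M ∧ (a ≤ b ∨ b ≤ a)) x y

/-! Comparable elements have a common lower bound, so connected sets are mail-connected.
Conversely, if `c` is a common lower bound of `a, b ∈ M`, then `a ≥ c ≤ b` is a path of
comparable elements in the lower closure of `M`, which has the same upper bounds as `M`. -/

section

variable [Preorder α]

theorem PosetConnected.mailConnected {M : Set α} (hM : PosetConnected M) :
    MailConnected M := by
  refine ⟨hM.1, fun x hx y hy => Relation.ReflTransGen.mono ?_ x y (hM.2 x hx y hy)⟩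
  rintro a b ⟨ha, hb, hab | hba⟩
  · exact ⟨ha, hb, a, le_rfl, hab⟩
  · exact ⟨ha, hb, b, hba, le_rfl⟩

theorem isLUB_lowerClosure_iff {M : Set α} {j : α} :
    IsLUB (lowerClosure M : Set α) j ↔ IsLUB M j := by
  rw [IsLUB, IsLUB, upperBounds_lowerClosure]

theorem MailConnected.posetConnected_lowerClosure {M : Set α} (hM : MailConnected M) :
    PosetConnected (lowerClosure M : Set α) := by
  set L : Set α := (lowerClosure M : Set α)
  have hML : M ⊆ L := subset_lowerClosure
  have path_of_mailPath : ∀ {a b : α},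
      Relation.ReflTransGen (fun a b => a ∈ M ∧ b ∈ M ∧ ∃ c, c ≤ a ∧ c ≤ b) a b →
      Relation.ReflTransGen (fun a b => a ∈ L ∧ b ∈ L ∧ (a ≤ b ∨ b ≤ a)) a b := by
    intro a b hab
    induction hab with
    | refl => exact .refl
    | tail _ hstep ih =>
      obtain ⟨hp, hq, c, hcp, hcq⟩ := hstep
      have hc : c ∈ L := ⟨_, hp, hcp⟩
      exact (ih.tail ⟨hML hp, hc, Or.inr hcp⟩).tail ⟨hc, hML hq, Or.inl hcq⟩
  refine ⟨hM.1.mono hML, ?_⟩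
  rintro x ⟨a, ha, hxa⟩ y ⟨b, hb, hyb⟩
  exact (Relation.ReflTransGen.single ⟨⟨a, ha, hxa⟩, hML ha, Or.inl hxa⟩).trans <|
    (path_of_mailPath (hM.2 a ha b hb)).tail ⟨hML hb, ⟨b, hb, hyb⟩, Or.inr hyb⟩

end

/-- A poset is a chainmail if and only if every connected subset has a join. -/
theorem chainmail_iff_every_connected_has_join [PartialOrder α] :
    (∀ M : Set α, MailConnected M → ∃ j, IsLUB M j) ↔
    (∀ M : Set α, PosetConnected M → ∃ j, IsLUB M j) := by
  refine ⟨fun h M hM => h M hM.mailConnected, fun h M hM => ?_⟩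
  obtain ⟨j, hj⟩ := h _ hM.posetConnected_lowerClosure
  exact ⟨j, isLUB_lowerClosure_iff.1 hj⟩
end

section
/- Let (L, C) be a typical connectivity lattice. Then the map L → D(C) sending x to C(x), the set of C-components of x, is the right Galois adjoint of the map D(C) → L sending S to ⋁S. Moreover, for each x, the set C(x) is totally mail-disconnected in L\{0}, and x = ⋁C(x) if and only if x is a join of connected elements. -/
variable {L : Type*}

/-- `S` is totally mail-disconnected relative to `C`: no two distinct elements of `S`
have a common lower bound belonging to `C`. -/
def TMDin [Preorder L] (C S : Set L) : Prop :=
  ∀ a ∈ S, ∀ b ∈ S, a ≠ b → ¬∃ c ∈ C, c ≤ a ∧ c ≤ b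

/-- `S` is totally mail-disconnected in `L \ {0}`: it consists of nonzero elements,
no two distinct of which have a common nonzero lower bound. -/
def TMDplus [CompleteLattice L] (S : Set L) : Prop :=
  (∀ a ∈ S, a ≠ ⊥) ∧ ∀ a ∈ S, ∀ b ∈ S, a ≠ b → ¬∃ c, c ≠ ⊥ ∧ c ≤ a ∧ c ≤ b

/-- The `C`-components of `x`: the maximal elements of `{c ∈ C | c ≤ x}`. -/
def Comps [Preorder L] (C : Set L) (x : L) : Set L :=
  {c | c ∈ C ∧ c ≤ x ∧ ∀ d ∈ C, d ≤ x → c ≤ d → c = d}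

lemma exists_comp_above [CompleteLattice L] (C : Set L) (h0 : ⊥ ∉ C)
    (hCL1 : ∀ X : Set L, X ⊆ C → X.Nonempty → (∃ b, b ≠ ⊥ ∧ ∀ x ∈ X, b ≤ x) → sSup X ∈ C)
    {c x : L} (hc : c ∈ C) (hcx : c ≤ x) : ∃ b ∈ Comps C x, c ≤ b := by
  set X : Set L := {d | d ∈ C ∧ d ≤ x ∧ c ≤ d} with hX
  have hcne : c ≠ ⊥ := fun h => h0 (h ▸ hc)
  have hm : sSup X ∈ C :=
    hCL1 X (fun d hd => hd.1) ⟨c, hc, hcx, le_rfl⟩ ⟨c, hcne, fun d hd => hd.2.2⟩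
  refine ⟨sSup X, ⟨hm, sSup_le fun d hd => hd.2.1, ?_⟩, le_sSup ⟨hc, hcx, le_rfl⟩⟩
  intro d hd hdx hmd
  exact le_antisymm hmd (le_sSup ⟨hd, hdx, (le_sSup (show c ∈ X from ⟨hc, hcx, le_rfl⟩)).trans hmd⟩)

lemma comps_pair [CompleteLattice L] (C : Set L)
    (hCL1 : ∀ X : Set L, X ⊆ C → X.Nonempty → (∃ b, b ≠ ⊥ ∧ ∀ x ∈ X, b ≤ x) → sSup X ∈ C)
    {x a b : L} (ha : a ∈ Comps C x) (hb : b ∈ Comps C x) (hab : a ≠ b)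
    {c : L} (hc : c ≠ ⊥) (hca : c ≤ a) (hcb : c ≤ b) : False := by
  have hs : sSup {a, b} ∈ C := by
    refine hCL1 {a, b} ?_ ⟨a, by simp⟩ ⟨c, hc, ?_⟩
    · rintro d (rfl | rfl); exacts [ha.1, hb.1]
    · rintro d (rfl | rfl); exacts [hca, hcb]
  have hsx : sSup {a, b} ≤ x := by
    rw [sSup_pair]; exact sup_le ha.2.1 hb.2.1
  have h1 : a = sSup {a, b} := ha.2.2 _ hs hsx (le_sSup (by simp))
  have h2 : b = sSup {a, b} := hb.2.2 _ hs hsx (le_sSup (by simp))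
  exact hab (h1.trans h2.symm)

/-- For a typical connectivity lattice `(L, C)` (i.e. `0 ∉ C` and the join of every
non-empty subset of `C` with a nonzero lower bound belongs to `C`), the map
`x ↦ C(x)` into `D(C)` is the right Galois adjoint of `S ↦ ⋁S`; each `C(x)` is
totally mail-disconnected in `L \ {0}`; and `x = ⋁ C(x)` iff `x` is a join of
connected elements. -/
theorem typicalConnectivity_adjunction [CompleteLattice L] (C : Set L)
    (h0 : ⊥ ∉ C)
    (hCL1 : ∀ X : Set L, X ⊆ C → X.Nonempty → (∃ b, b ≠ ⊥ ∧ ∀ x ∈ X, b ≤ x) → sSup X ∈ C) :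
    (∀ x : L, Comps C x ⊆ C ∧ TMDin C (Comps C x)) ∧
    (∀ S : Set L, S ⊆ C → TMDin C S → ∀ x : L,
      (sSup S ≤ x ↔ ∀ a ∈ S, ∃ b ∈ Comps C x, a ≤ b)) ∧
    (∀ x : L, TMDplus (Comps C x)) ∧
    (∀ x : L, x = sSup (Comps C x) ↔ ∃ X : Set L, X ⊆ C ∧ x = sSup X) := by
  refine ⟨fun x => ⟨fun c hc => hc.1, ?_⟩, fun S hS _ x => ⟨?_, ?_⟩, fun x => ⟨fun a ha => fun h => h0 (h ▸ ha.1), ?_⟩, fun x => ⟨fun h => ⟨Comps C x, fun c hc => hc.1, h⟩, ?_⟩⟩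
  · rintro a ha b hb hab ⟨c, hcC, hca, hcb⟩
    exact comps_pair C hCL1 ha hb hab (fun h => h0 (h ▸ hcC)) hca hcb
  · intro h a haS
    exact exists_comp_above C h0 hCL1 (hS haS) ((le_sSup haS).trans h)
  · intro h
    refine sSup_le fun a haS => ?_
    obtain ⟨b, hb, hab⟩ := h a haS
    exact hab.trans hb.2.1
  · rintro a ha b hb hab ⟨c, hc, hca, hcb⟩
    exact comps_pair C hCL1 ha hb hab hc hca hcb
  · rintro ⟨X, hXC, rfl⟩
    refine le_antisymm (sSup_le fun c hcX => ?_) (sSup_le fun c hc => hc.2.1)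
    obtain ⟨b, hb, hcb⟩ := exists_comp_above C h0 hCL1 (hXC hcX) (le_sSup hcX)
    exact hcb.trans (le_sSup hb)
end

section
/- Let L be a complete lattice and C ⊆ L. Suppose the map D(C) → L, S ↦ ⋁S, has a right Galois adjoint x ↦ K(x), and each K(x) is a totally mail-disconnected subset of L\{0}. Then 0 ∉ C and C satisfies (CL1): the join of any non-empty subset of C with a nonzero lower bound belongs to C. -/
variable {L : Type*}

/-- Suppose `S ↦ ⋁S : D(C) → L` has a right Galois adjoint `x ↦ K x`, and each
`K x` is totally mail-disconnected in `L \ {0}`. Then `0 ∉ C` and `C` satisfies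
(CL1): the join of any non-empty subset of `C` with a nonzero lower bound belongs
to `C`. -/
theorem typicalConnectivity_of_adjoint [CompleteLattice L] (C : Set L)
    (K : L → Set L)
    (hKmem : ∀ x : L, K x ⊆ C ∧ TMDin C (K x))
    (adj : ∀ S : Set L, S ⊆ C → TMDin C S → ∀ x : L,
      (sSup S ≤ x ↔ ∀ a ∈ S, ∃ b ∈ K x, a ≤ b))
    (hplus : ∀ x : L, TMDplus (K x)) :
    ⊥ ∉ C ∧
    ∀ X : Set L, X ⊆ C → X.Nonempty → (∃ b, b ≠ ⊥ ∧ ∀ x ∈ X, b ≤ x) → sSup X ∈ C := by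
  -- counit: sSup (K x) ≤ x
  have counit : ∀ x : L, sSup (K x) ≤ x := by
    intro x
    exact (adj (K x) (hKmem x).1 (hKmem x).2 x).mpr (fun a ha => ⟨a, ha, le_rfl⟩)
  -- singletons are TMDin
  have hsing : ∀ a : L, TMDin C ({a} : Set L) := by
    intro a p hp q hq hpq
    rw [Set.mem_singleton_iff] at hp hq
    exact absurd (hp.trans hq.symm) hpq
  constructor
  · intro hbot
    have h := (adj {⊥} (by simpa using hbot) (hsing ⊥) ⊥).mp (by simp) ⊥ rfl
    obtain ⟨b, hb, hble⟩ := h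
    have hbbot : b = ⊥ := le_bot_iff.mp ((le_sSup hb).trans (counit ⊥))
    exact (hplus ⊥).1 b hb hbbot
  · intro X hXC ⟨a₀, ha₀⟩ ⟨b, hbne, hblb⟩
    set x := sSup X with hx
    -- each a ∈ X is below some element of K x
    have below : ∀ a ∈ X, ∃ k ∈ K x, a ≤ k := by
      intro a ha
      exact (adj {a} (by simpa using hXC ha) (hsing a) x).mp (by simpa using le_sSup ha) a rfl
    obtain ⟨k, hk, hak⟩ := below a₀ ha₀
    have hall : ∀ a ∈ X, a ≤ k := by
      intro a ha
      obtain ⟨k', hk', hak'⟩ := below a ha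
      rcases eq_or_ne k k' with h | h
      · exact h ▸ hak'
      · exact absurd ⟨b, hbne, (hblb a₀ ha₀).trans hak, (hblb a ha).trans hak'⟩
          ((hplus x).2 k hk k' hk' h)
    have hle : x ≤ k := sSup_le hall
    have hge : k ≤ x := (le_sSup hk).trans (counit x)
    have : x = k := le_antisymm hle hge
    exact this ▸ (hKmem x).1 hk
end

section
/- For a complete lattice L and a subset C ⊆ L, the map D(C) → L given by S ↦ ⋁S has a right Galois adjoint if and only if C, with the induced order, is a subchainmail of L, i.e., C is closed in L under joins of subsets of C that are mails of C (non-empty subsets of C with a lower bound in C). -/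
variable {L : Type*}

section Aux

variable [CompleteLattice L]

/-- Two elements have a common lower bound in `C`. -/
def Rel' (C : Set L) (a b : L) : Prop := ∃ c ∈ C, c ≤ a ∧ c ≤ b

/-- The relation `Rel'` restricted to a set `M`. -/
def RelIn (C M : Set L) (a b : L) : Prop := a ∈ M ∧ b ∈ M ∧ Rel' C a b

lemma rel'_symm {C : Set L} {a b : L} (h : Rel' C a b) : Rel' C b a := by
  obtain ⟨c, hc, h1, h2⟩ := h; exact ⟨c, hc, h2, h1⟩

lemma relIn_symm {C M : Set L} {a b : L} (h : RelIn C M a b) : RelIn C M b a :=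
  ⟨h.2.1, h.1, rel'_symm h.2.2⟩

lemma reach_symm {C M : Set L} {a b : L}
    (h : Relation.ReflTransGen (RelIn C M) a b) :
    Relation.ReflTransGen (RelIn C M) b a := by
  induction h with
  | refl => exact .refl
  | tail _ hstep ih => exact .trans (.single (relIn_symm hstep)) ih

lemma reach_strengthen {C M : Set L} {a b : L}
    (h : Relation.ReflTransGen (RelIn C M) a b) :
    Relation.ReflTransGen
      (RelIn C {b' | b' ∈ M ∧ Relation.ReflTransGen (RelIn C M) a b'}) a b := by
  induction h with
  | refl => exact .refl
  | tail h1 hstep ih =>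
    exact ih.tail ⟨⟨hstep.1, h1⟩, ⟨hstep.2.1, h1.tail hstep⟩, hstep.2.2⟩

lemma conn_sSup_mem {C : Set L}
    (hC : ∀ M : Set L, M ⊆ C → M.Nonempty → (∃ b ∈ C, ∀ m ∈ M, b ≤ m) → sSup M ∈ C)
    {M : Set L} (hMC : M ⊆ C) {m₀ : L} (hm₀ : m₀ ∈ M)
    (hconn : ∀ m ∈ M, Relation.ReflTransGen (RelIn C M) m₀ m) :
    sSup M ∈ C := by
  set 𝒮 : Set (Set L) := {N | N ⊆ M ∧ m₀ ∈ N ∧ sSup N ∈ C} with h𝒮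
  have h0 : ({m₀} : Set L) ∈ 𝒮 := by
    refine ⟨by simpa using hm₀, rfl, ?_⟩
    simpa using hMC hm₀
  have hZ : ∀ c ⊆ 𝒮, IsChain (· ⊆ ·) c → c.Nonempty →
      ∃ ub ∈ 𝒮, ∀ s ∈ c, s ⊆ ub := by
    intro c hcS hchain hcne
    refine ⟨⋃₀ c, ⟨?_, ?_, ?_⟩, fun s hs => Set.subset_sUnion_of_mem hs⟩
    · exact Set.sUnion_subset fun N hN => (hcS hN).1
    · obtain ⟨N, hN⟩ := hcne
      exact ⟨N, hN, (hcS hN).2.1⟩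
    · rw [sSup_sUnion]
      have : ⨆ s ∈ c, sSup s = sSup (sSup '' c) := by
        rw [sSup_image]
      rw [this]
      refine hC _ ?_ (hcne.image _) ⟨m₀, hMC hm₀, ?_⟩
      · rintro y ⟨N, hN, rfl⟩; exact (hcS hN).2.2
      · rintro y ⟨N, hN, rfl⟩; exact le_sSup (hcS hN).2.1
  obtain ⟨N, -, hN, hmax⟩ := zorn_subset_nonempty 𝒮 hZ _ h0
  · obtain ⟨hNM, hm₀N, hsN⟩ := hN
    -- N is closed under one step of the relation
    have hstep : ∀ a ∈ N, ∀ b, RelIn C M a b → b ∈ N := by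
      intro a haN b hab
      obtain ⟨haM, hbM, c, hcC, hca, hcb⟩ := hab
      have hpair : sSup ({sSup N, b} : Set L) ∈ C := by
        refine hC _ ?_ ⟨sSup N, by simp⟩ ⟨c, hcC, ?_⟩
        · intro y hy
          rcases hy with h | h
          · subst h; exact hsN
          · simp only [Set.mem_singleton_iff] at h; subst h; exact hMC hbM
        · intro y hy
          rcases hy with h | h
          · subst h; exact le_trans hca (le_sSup haN)
          · simp only [Set.mem_singleton_iff] at h; subst h; exact hcb
      have hins : insert b N ∈ 𝒮 := by
        refine ⟨Set.insert_subset hbM hNM, Set.mem_insert_of_mem _ hm₀N, ?_⟩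
        have : sSup (insert b N) = sSup ({sSup N, b} : Set L) := by
          simp [sSup_insert, sup_comm]
        rw [this]; exact hpair
      have := hmax hins (Set.subset_insert b N)

      exact this (Set.mem_insert b N)
    have hMN : M ⊆ N := by
      intro m hm
      have := hconn m hm
      induction this with
      | refl => exact hm₀N
      | tail _ hst ih => exact hstep _ (ih hst.1) _ hst
    have : M = N := le_antisymm hMN hNM
    rw [this]; exact hsN

end Aux

/-- For a complete lattice `L` and `C ⊆ L`, the map `D(C) → L`, `S ↦ ⋁S`, has a
right Galois adjoint if and only if `C` is a subchainmail of `L`: `C` is closed in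
`L` under joins of non-empty subsets of `C` having a lower bound in `C`. -/
theorem adjoint_iff_subchainmail [CompleteLattice L] (C : Set L) :
    (∃ K : L → Set L, (∀ x : L, K x ⊆ C ∧ TMDin C (K x)) ∧
      ∀ S : Set L, S ⊆ C → TMDin C S → ∀ x : L,
        (sSup S ≤ x ↔ ∀ a ∈ S, ∃ b ∈ K x, a ≤ b)) ↔
    (∀ M : Set L, M ⊆ C → M.Nonempty → (∃ b ∈ C, ∀ m ∈ M, b ≤ m) → sSup M ∈ C) := by
  constructor
  · rintro ⟨K, hK, hadj⟩ M hMC ⟨m₀, hm₀⟩ ⟨b, hbC, hb⟩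
    set x := sSup M with hx
    -- every m in M lies under some element of K x
    have hup : ∀ m ∈ M, ∃ c ∈ K x, m ≤ c := by
      intro m hm
      have hsing : TMDin C ({m} : Set L) := by
        intro a ha b hb hne
        simp only [Set.mem_singleton_iff] at ha hb
        exact absurd (ha.trans hb.symm) hne
      have := (hadj {m} (by simpa using hMC hm) hsing x).mp
        (by simpa using le_sSup hm)
      simpa using this
    obtain ⟨c, hcK, hmc⟩ := hup m₀ hm₀
    -- all the covering elements coincide with c
    have hallc : ∀ m ∈ M, m ≤ c := by
      intro m hm
      obtain ⟨c', hc'K, hmc'⟩ := hup m hm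
      rcases eq_or_ne c' c with rfl | hne
      · exact hmc'
      · exact absurd ⟨b, hbC, le_trans (hb m hm) hmc', le_trans (hb m₀ hm₀) hmc⟩
          ((hK x).2 c' hc'K c hcK hne)
    have hclex : c ≤ x := by
      have hsing : TMDin C ({c} : Set L) := by
        intro a ha b hb hne
        simp only [Set.mem_singleton_iff] at ha hb
        exact absurd (ha.trans hb.symm) hne
      have := (hadj {c} (by simpa using (hK x).1 hcK) hsing x).mpr
        (by intro a ha; simp only [Set.mem_singleton_iff] at ha; exact ⟨c, hcK, ha.le⟩)
      simpa using this
    have hxc : x = c := le_antisymm (sSup_le hallc) hclex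
    rw [hxc]; exact (hK x).1 hcK
  · intro hC
    classical
    -- the set of elements of C below x
    set A : L → Set L := fun x => {c | c ∈ C ∧ c ≤ x} with hA
    -- the connected component of a within A x
    set comp : L → L → Set L := fun x a =>
      {b | b ∈ A x ∧ Relation.ReflTransGen (RelIn C (A x)) a b} with hcomp
    have comp_subset : ∀ x a, comp x a ⊆ A x := fun x a b hb => hb.1
    have mem_comp_self : ∀ x a, a ∈ A x → a ∈ comp x a := fun x a ha => ⟨ha, .refl⟩
    have comp_sSup_mem : ∀ x, ∀ a ∈ A x, sSup (comp x a) ∈ C := by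
      intro x a ha
      refine conn_sSup_mem hC (fun b hb => hb.1.1) (mem_comp_self x a ha) ?_
      intro m hm
      have := reach_strengthen (C := C) (M := A x) hm.2
      exact this
    have comp_sSup_le : ∀ x a, sSup (comp x a) ≤ x :=
      fun x a => sSup_le fun b hb => hb.1.2
    have sSup_comp_mem_comp : ∀ x, ∀ a ∈ A x, sSup (comp x a) ∈ comp x a := by
      intro x a ha
      have h1 : sSup (comp x a) ∈ A x := ⟨comp_sSup_mem x a ha, comp_sSup_le x a⟩
      exact ⟨h1, Relation.ReflTransGen.single
        ⟨ha, h1, a, ha.1, le_rfl, le_sSup (mem_comp_self x a ha)⟩⟩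
    -- components containing a common point are equal
    have comp_eq : ∀ x a a', a ∈ A x → a' ∈ A x → ∀ t, t ∈ comp x a → t ∈ comp x a' →
        comp x a = comp x a' := by
      intro x a a' ha ha' t ht ht'
      ext b
      constructor
      · rintro ⟨hbA, hab⟩
        exact ⟨hbA, (ht'.2.trans (reach_symm ht.2)).trans hab⟩
      · rintro ⟨hbA, hab⟩
        exact ⟨hbA, (ht.2.trans (reach_symm ht'.2)).trans hab⟩
    refine ⟨fun x => {y | ∃ a ∈ A x, y = sSup (comp x a)}, ?_, ?_⟩
    · intro x
      constructor
      · rintro y ⟨a, ha, rfl⟩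
        exact comp_sSup_mem x a ha
      · rintro y ⟨a, ha, rfl⟩ y' ⟨a', ha', rfl⟩ hne ⟨c, hcC, hcy, hcy'⟩
        have hcA : c ∈ A x := ⟨hcC, hcy.trans (comp_sSup_le x a)⟩
        have hc1 : c ∈ comp x a := by
          have hs := sSup_comp_mem_comp x a ha
          exact ⟨hcA, hs.2.tail ⟨hs.1, hcA, c, hcC, hcy, le_rfl⟩⟩
        have hc2 : c ∈ comp x a' := by
          have hs := sSup_comp_mem_comp x a' ha'
          exact ⟨hcA, hs.2.tail ⟨hs.1, hcA, c, hcC, hcy', le_rfl⟩⟩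
        exact hne (by rw [comp_eq x a a' ha ha' c hc1 hc2])
    · intro S hSC hTMD x
      constructor
      · intro hle a haS
        have haA : a ∈ A x := ⟨hSC haS, (le_sSup haS).trans hle⟩
        exact ⟨sSup (comp x a), ⟨a, haA, rfl⟩, le_sSup (mem_comp_self x a haA)⟩
      · intro h
        refine sSup_le fun a haS => ?_
        obtain ⟨b, ⟨a', ha', rfl⟩, hab⟩ := h a haS
        exact hab.trans (comp_sSup_le x a')
end

section
/- For a poset Γ, the exterior D(Γ) of totally mail-disconnected subsets of Γ (ordered by: S₁ ≤ S₂ when each element of S₁ is below some element of S₂) is a complete lattice if and only if Γ is a chainmail. -/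
/-!
If `Γ` is a chainmail, the exterior join of a family `𝒮` is the set of maximal elements of
`X`, the set of points lying below every totally mail-disconnected upper bound of `𝒮`.
The lower closure of a totally mail-disconnected set contains the join of every mail inside
it, since the whole mail sits below a single one of its elements; hence so does `X`. So the
join of `{e ∈ X | a ≤ e}` is a maximal element of `X` above `a`, and two maximal elements
with a common lower bound both equal their join.

Conversely, the exterior join of the singletons of a mail `M` has a single element above
all of `M`, and comparing with the singleton `{u}` of an upper bound `u` shows it is the join of `M`.
-/

variable {α : Type*}

/-- A totally mail-disconnected set: no two distinct elements have a common lower bound. -/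
def TMD [Preorder α] (S : Set α) : Prop :=
  ∀ a ∈ S, ∀ b ∈ S, a ≠ b → ¬∃ c, c ≤ a ∧ c ≤ b

/-- The order on the exterior `D(Γ)`: `S₁ ≤ S₂` when each element of `S₁` is below
some element of `S₂`. -/
def Dle [Preorder α] (S T : Set α) : Prop :=
  ∀ a ∈ S, ∃ b ∈ T, a ≤ b

def IsChainmail (α : Type*) [Preorder α] : Prop :=
  ∀ M : Set α, M.Nonempty → BddBelow M → ∃ j, IsLUB M j

def MailJoinClosed [Preorder α] (X : Set α) : Prop :=
  ∀ ⦃M : Set α⦄ ⦃j : α⦄, M ⊆ X → M.Nonempty → BddBelow M → IsLUB M j → j ∈ X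

def IsExteriorLUB [Preorder α] (𝒮 : Set (Set α)) (J : Set α) : Prop :=
  TMD J ∧ (∀ S ∈ 𝒮, Dle S J) ∧ ∀ J' : Set α, TMD J' → (∀ S ∈ 𝒮, Dle S J') → Dle J J'

section Preorder

variable [Preorder α] {S T X M : Set α}

lemma dle_iff_subset_lowerClosure : Dle S T ↔ S ⊆ lowerClosure T := by
  simp only [Dle, Set.subset_def, SetLike.mem_coe, mem_lowerClosure]

lemma tmd_singleton (a : α) : TMD ({a} : Set α) := by
  rintro x rfl y rfl hxy
  exact absurd rfl hxy

lemma TMD.exists_mem_upperBounds (hT : TMD T) (hM : M ⊆ lowerClosure T) (hne : M.Nonempty)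
    (hbdd : BddBelow M) : ∃ t ∈ T, t ∈ upperBounds M := by
  obtain ⟨m₀, hm₀⟩ := hne
  obtain ⟨c, hc⟩ := hbdd
  obtain ⟨t₀, ht₀, hm₀t₀⟩ := mem_lowerClosure.1 (hM hm₀)
  refine ⟨t₀, ht₀, fun m hm => ?_⟩
  obtain ⟨t, ht, hmt⟩ := mem_lowerClosure.1 (hM hm)
  obtain rfl : t = t₀ := by
    by_contra htt₀
    exact hT t ht t₀ ht₀ htt₀ ⟨c, (hc hm).trans hmt, (hc hm₀).trans hm₀t₀⟩
  exact hmt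

lemma TMD.mailJoinClosed_lowerClosure (hT : TMD T) :
    MailJoinClosed (lowerClosure T : Set α) := by
  intro M j hM hne hbdd hj
  obtain ⟨t, ht, htM⟩ := hT.exists_mem_upperBounds hM hne hbdd
  exact mem_lowerClosure.2 ⟨t, ht, hj.2 htM⟩

lemma mailJoinClosed_iInter {ι : Sort*} {X : ι → Set α} (h : ∀ i, MailJoinClosed (X i)) :
    MailJoinClosed (⋂ i, X i) := fun _ _ hM hne hbdd hj =>
  Set.mem_iInter.2 fun i => h i (hM.trans (Set.iInter_subset X i)) hne hbdd hj

lemma MailJoinClosed.exists_ge_maximal (hΓ : IsChainmail α) (hX : MailJoinClosed X) {a : α}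
    (ha : a ∈ X) : ∃ s, a ≤ s ∧ Maximal (· ∈ X) s := by
  set E := {e ∈ X | a ≤ e}
  have haE : a ∈ E := ⟨ha, le_rfl⟩
  have hE : BddBelow E := ⟨a, fun e he => he.2⟩
  obtain ⟨s, hs⟩ := hΓ E ⟨a, haE⟩ hE
  have has : a ≤ s := hs.1 haE
  exact ⟨s, has, hX (fun e he => he.1) ⟨a, haE⟩ hE hs,
    fun y hy hsy => hs.1 ⟨hy, has.trans hsy⟩⟩

end Preorder

lemma MailJoinClosed.tmd_setOf_maximal [PartialOrder α] {X : Set α} (hΓ : IsChainmail α)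
    (hX : MailJoinClosed X) : TMD {s | Maximal (· ∈ X) s} := by
  rintro s₁ hs₁ s₂ hs₂ hne ⟨c, hc₁, hc₂⟩
  have hpair : BddBelow {s₁, s₂} := ⟨c, by simp [hc₁, hc₂]⟩
  obtain ⟨w, hw⟩ := hΓ {s₁, s₂} (Set.insert_nonempty _ _) hpair
  have hwX : w ∈ X :=
    hX (Set.pair_subset hs₁.1 hs₂.1) (Set.insert_nonempty _ _) hpair hw
  have h₁ : s₁ ≤ w := hw.1 (by simp)
  have h₂ : s₂ ≤ w := hw.1 (by simp)
  exact hne ((le_antisymm h₁ (hs₁.2 hwX h₁)).trans (le_antisymm (hs₂.2 hwX h₂) h₂))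

theorem IsChainmail.exists_isExteriorLUB [PartialOrder α] (hΓ : IsChainmail α)
    (𝒮 : Set (Set α)) : ∃ J, IsExteriorLUB 𝒮 J := by
  set X := ⋂ (T : Set α) (_ : TMD T ∧ ∀ S ∈ 𝒮, Dle S T), (lowerClosure T : Set α)
  have hX : MailJoinClosed X := mailJoinClosed_iInter fun _ =>
    mailJoinClosed_iInter fun hT => hT.1.mailJoinClosed_lowerClosure
  have mem_X {x : α} : x ∈ X ↔ ∀ T, TMD T → (∀ S ∈ 𝒮, Dle S T) → x ∈ lowerClosure T := by
    simp only [X, Set.mem_iInter, SetLike.mem_coe, and_imp]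
  refine ⟨{s | Maximal (· ∈ X) s}, hX.tmd_setOf_maximal hΓ, fun S hS a ha => ?_,
    fun J' hJ' hJ'𝒮 j hj => mem_lowerClosure.1 (mem_X.1 hj.1 J' hJ' hJ'𝒮)⟩
  have haX : a ∈ X := mem_X.2 fun T _ hT𝒮 => dle_iff_subset_lowerClosure.1 (hT𝒮 S hS) ha
  obtain ⟨s, has, hs⟩ := hX.exists_ge_maximal hΓ haX
  exact ⟨s, hs, has⟩

theorem isChainmail_of_forall_exists_isExteriorLUB [Preorder α]
    (h : ∀ 𝒮 : Set (Set α), (∀ S ∈ 𝒮, TMD S) → ∃ J, IsExteriorLUB 𝒮 J) : IsChainmail α := by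
  intro M hne hbdd
  obtain ⟨J, hJ, hMJ, hJleast⟩ :=
    h ((fun m => {m}) '' M) (Set.forall_mem_image.2 fun m _ => tmd_singleton m)
  have hM : M ⊆ lowerClosure J := fun m hm => hMJ {m} ⟨m, hm, rfl⟩ m rfl
  obtain ⟨j, hj, hjM⟩ := hJ.exists_mem_upperBounds hM hne hbdd
  refine ⟨j, hjM, fun u hu => ?_⟩
  have hMu : ∀ S ∈ (fun m => {m}) '' M, Dle S {u} := by
    rintro _ ⟨m, hm, rfl⟩ _ rfl
    exact ⟨u, rfl, hu hm⟩
  obtain ⟨_, rfl, hju⟩ := hJleast {u} (tmd_singleton u) hMu j hj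
  exact hju

/-- For a poset `Γ`, the exterior `D(Γ)` of totally mail-disconnected subsets is a
complete lattice (every family of totally mail-disconnected sets has a least upper
bound among the totally mail-disconnected sets) if and only if `Γ` is a chainmail
(every mail has a join). -/
theorem exterior_completeLattice_iff_chainmail [PartialOrder α] :
    (∀ 𝒮 : Set (Set α), (∀ S ∈ 𝒮, TMD S) →
      ∃ J : Set α, TMD J ∧ (∀ S ∈ 𝒮, Dle S J) ∧
        ∀ J' : Set α, TMD J' → (∀ S ∈ 𝒮, Dle S J') → Dle J J') ↔
    (∀ M : Set α, M.Nonempty → (∃ b, ∀ m ∈ M, b ≤ m) → ∃ j, IsLUB M j) :=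
  ⟨isChainmail_of_forall_exists_isExteriorLUB,
    fun hΓ 𝒮 _ => IsChainmail.exists_isExteriorLUB hΓ 𝒮⟩
end

section
/- For a down-closed subset X of a chainmail Γ, the following are equivalent: (1) X is the down-set of some totally mail-disconnected subset of Γ; (2) X with the induced order is a subchainmail of Γ (closed in Γ under joins of mails contained in X). -/
variable {α : Type*}

/-- For a down-closed subset `X` of a chainmail `Γ`, the following are equivalent:
(1) `X` is the down-set of some totally mail-disconnected subset of `Γ`;
(2) `X` is a subchainmail of `Γ`, i.e. the join in `Γ` of any mail of `X`
(non-empty subset of `X` with a lower bound in `X`) lies in `X`. -/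
theorem downclosed_subchainmail_iff_downset_of_TMD [PartialOrder α]
    (hΓ : ∀ M : Set α, M.Nonempty → (∃ b, ∀ m ∈ M, b ≤ m) → ∃ j, IsLUB M j)
    (X : Set α) (hdc : ∀ a b : α, a ≤ b → b ∈ X → a ∈ X) :
    (∃ D : Set α, TMD D ∧ X = {x | ∃ d ∈ D, x ≤ d}) ↔
    (∀ M : Set α, M ⊆ X → M.Nonempty → (∃ b ∈ X, ∀ m ∈ M, b ≤ m) →
      ∀ j : α, IsLUB M j → j ∈ X) := by
  constructor
  · rintro ⟨D, hD, rfl⟩ M hMX ⟨m0, hm0⟩ ⟨b, hbX, hb⟩ j hj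
    obtain ⟨d0, hd0D, hbd0⟩ := hbX
    refine ⟨d0, hd0D, hj.2 ?_⟩
    intro m hm
    obtain ⟨d, hdD, hmd⟩ := hMX hm
    have : d = d0 := by
      by_contra hne
      exact hD d hdD d0 hd0D hne ⟨b, le_trans (hb m hm) hmd, hbd0⟩
    exact this ▸ hmd
  · intro h
    refine ⟨{j ∈ X | ∀ y ∈ X, (∃ c, c ≤ j ∧ c ≤ y) → y ≤ j}, ?_, ?_⟩
    · rintro a ⟨haX, ha⟩ b ⟨hbX, hb⟩ hne ⟨c, hca, hcb⟩
      exact hne (le_antisymm (hb a haX ⟨c, hcb, hca⟩) (ha b hbX ⟨c, hca, hcb⟩))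
    · ext x
      constructor
      · intro hx
        obtain ⟨j, hj⟩ := hΓ {y ∈ X | x ≤ y} ⟨x, hx, le_refl x⟩
          ⟨x, fun m hm => hm.2⟩
        have hjX : j ∈ X := h {y ∈ X | x ≤ y} (fun y hy => hy.1) ⟨x, hx, le_refl x⟩
          ⟨x, hx, fun m hm => hm.2⟩ j hj
        have hxj : x ≤ j := hj.1 ⟨hx, le_refl x⟩
        refine ⟨j, ⟨hjX, ?_⟩, hxj⟩
        rintro y hyX ⟨c, hcj, hcy⟩
        obtain ⟨w, hw⟩ := hΓ {j, y} ⟨j, Or.inl rfl⟩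
          ⟨c, by rintro m (rfl | rfl) <;> assumption⟩
        have hwX : w ∈ X := h {j, y} (by rintro m (rfl | rfl) <;> assumption)
          ⟨j, Or.inl rfl⟩ ⟨c, hdc c j hcj hjX, by rintro m (rfl | rfl) <;> assumption⟩ w hw
        have hjw : j ≤ w := hw.1 (Or.inl rfl)
        have hyw : y ≤ w := hw.1 (Or.inr rfl)
        have hwj : w ≤ j := hj.1 ⟨hwX, le_trans hxj hjw⟩
        exact le_trans hyw hwj
      · rintro ⟨d, ⟨hdX, _⟩, hxd⟩
        exact hdc x d hxd hdX
end

section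
/- Let (L, C) be a connectivity lattice. Then the following are equivalent: (i) 0 ∈ C; (ii) C is closed under all joins in L; (iii) C(x) = {⋁(C ∩ x^↓)} for every x; (iv) every element x of L has exactly one C-component; (v) the kernel ⋁C(x) of every element x is connected (belongs to C). -/
variable {L : Type*}

/-- `C` is a connectivity in `L`: `C` is closed in `L` under joins of mails of `C`
(non-empty subsets of `C` with a lower bound in `C`). -/
def IsConnectivity [CompleteLattice L] (C : Set L) : Prop :=
  ∀ M : Set L, M ⊆ C → M.Nonempty → (∃ b ∈ C, ∀ m ∈ M, b ≤ m) → sSup M ∈ C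

/-- Every connected element below `x` lies below some `C`-component of `x`. -/
lemma below_comp [CompleteLattice L] {C : Set L} (hC : IsConnectivity C)
    {d x : L} (hd : d ∈ C) (hdx : d ≤ x) : ∃ e ∈ Comps C x, d ≤ e := by
  set S : Set L := {e | e ∈ C ∧ d ≤ e ∧ e ≤ x} with hS
  have hsub : S ⊆ C := fun e he => he.1
  have hdS : d ∈ S := ⟨hd, le_refl d, hdx⟩
  have hsC : sSup S ∈ C := hC S hsub ⟨d, hdS⟩ ⟨d, hd, fun m hm => hm.2.1⟩
  have hsx : sSup S ≤ x := sSup_le fun e he => he.2.2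
  have hds : d ≤ sSup S := le_sSup hdS
  refine ⟨sSup S, ⟨hsC, hsx, fun e heC hex hle => ?_⟩, hds⟩
  exact le_antisymm hle (le_sSup ⟨heC, hds.trans hle, hex⟩)

/-- For a connectivity lattice `(L, C)` the following are equivalent:
(i) `0 ∈ C`; (ii) `C` is closed under all joins in `L`;
(iii) `C(x) = {⋁(C ∩ x^↓)}` for every `x`; (iv) every `x` has exactly one
`C`-component; (v) the kernel `⋁C(x)` of every `x` is connected. -/
theorem kernelConnectivity_tfae [CompleteLattice L] (C : Set L)
    (hC : IsConnectivity C) :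
    ((⊥ ∈ C) ↔ (∀ X : Set L, X ⊆ C → sSup X ∈ C)) ∧
    ((∀ X : Set L, X ⊆ C → sSup X ∈ C) ↔
      (∀ x : L, Comps C x = {sSup {c | c ∈ C ∧ c ≤ x}})) ∧
    ((∀ x : L, Comps C x = {sSup {c | c ∈ C ∧ c ≤ x}}) ↔
      (∀ x : L, ∃! c, c ∈ Comps C x)) ∧
    ((∀ x : L, ∃! c, c ∈ Comps C x) ↔ (∀ x : L, sSup (Comps C x) ∈ C)) := by
  -- (ii) → (iii)
  have h23 : (∀ X : Set L, X ⊆ C → sSup X ∈ C) →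
      (∀ x : L, Comps C x = {sSup {c | c ∈ C ∧ c ≤ x}}) := by
    intro h2 x
    set s := sSup {c | c ∈ C ∧ c ≤ x} with hs
    have hsC : s ∈ C := h2 _ fun c hc => hc.1
    have hsx : s ≤ x := sSup_le fun c hc => hc.2
    have hsComp : s ∈ Comps C x := by
      refine ⟨hsC, hsx, fun d hdC hdx hle => ?_⟩
      exact le_antisymm hle (le_sSup ⟨hdC, hdx⟩)
    ext c
    simp only [Set.mem_singleton_iff]
    constructor
    · rintro ⟨hcC, hcx, hmax⟩
      exact hmax s hsC hsx (le_sSup ⟨hcC, hcx⟩)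
    · rintro rfl; exact hsComp
  -- (iii) → (iv)
  have h34 : (∀ x : L, Comps C x = {sSup {c | c ∈ C ∧ c ≤ x}}) →
      (∀ x : L, ∃! c, c ∈ Comps C x) := by
    intro h3 x
    refine ⟨sSup {c | c ∈ C ∧ c ≤ x}, ?_, ?_⟩
    · rw [h3 x]; rfl
    · intro y hy; rw [h3 x] at hy; exact hy
  -- (iv) → (iii)
  have h43 : (∀ x : L, ∃! c, c ∈ Comps C x) →
      (∀ x : L, Comps C x = {sSup {c | c ∈ C ∧ c ≤ x}}) := by
    intro h4 x
    obtain ⟨c, hc, huniq⟩ := h4 x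
    have hcs : c = sSup {d | d ∈ C ∧ d ≤ x} := by
      refine le_antisymm (le_sSup ⟨hc.1, hc.2.1⟩) (sSup_le fun d hd => ?_)
      obtain ⟨e, heComp, hde⟩ := below_comp hC hd.1 hd.2
      rw [huniq e heComp] at hde; exact hde
    ext y
    simp only [Set.mem_singleton_iff, ← hcs]
    exact ⟨fun hy => huniq y hy, fun hy => hy ▸ hc⟩
  -- (iv) → (v)
  have h45 : (∀ x : L, ∃! c, c ∈ Comps C x) → (∀ x : L, sSup (Comps C x) ∈ C) := by
    intro h4 x
    obtain ⟨c, hc, huniq⟩ := h4 x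
    have : Comps C x = {c} := Set.eq_singleton_iff_unique_mem.mpr ⟨hc, huniq⟩
    rw [this, sSup_singleton]; exact hc.1
  -- (v) → (i)
  have h51 : (∀ x : L, sSup (Comps C x) ∈ C) → ⊥ ∈ C := by
    intro h5
    have hsup : sSup (Comps C ⊥) = ⊥ :=
      le_bot_iff.mp (sSup_le fun c hc => hc.2.1)
    have := h5 ⊥
    rwa [hsup] at this
  -- (i) → (ii)
  have h12 : ⊥ ∈ C → (∀ X : Set L, X ⊆ C → sSup X ∈ C) := by
    intro hbot X hX
    have : sSup X = sSup (X ∪ {⊥}) := by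
      rw [sSup_union, sSup_singleton, sup_bot_eq]
    rw [this]
    exact hC _ (Set.union_subset hX (by simp [hbot]))
      ⟨⊥, Or.inr rfl⟩ ⟨⊥, hbot, fun m _ => bot_le⟩
  -- (v) → (iv)
  have h54 : (∀ x : L, sSup (Comps C x) ∈ C) → (∀ x : L, ∃! c, c ∈ Comps C x) := by
    intro h5 x
    set k := sSup (Comps C x) with hk
    have hkC : k ∈ C := h5 x
    have hkx : k ≤ x := sSup_le fun c hc => hc.2.1
    obtain ⟨e, heComp, hke⟩ := below_comp hC hkC hkx
    have hek : e ≤ k := le_sSup heComp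
    have hek' : e = k := le_antisymm hek hke
    refine ⟨e, heComp, fun y hy => ?_⟩
    exact hy.2.2 e heComp.1 heComp.2.1 (hek'.symm ▸ le_sSup hy)
  refine ⟨⟨fun h1 => h12 h1, fun h2 => ?_⟩, ⟨h23, fun h3 => h12 (h51 (h45 (h34 h3)))⟩,
    ⟨h34, h43⟩, ⟨h45, h54⟩⟩
  exact h51 (h45 (h34 (h23 h2)))
end

section
/- A subset C of a complete lattice L is a connectivity (subchainmail of L) if and only if for every element x of L, each element of C ∩ x^↓ is below a unique maximal element of C ∩ x^↓. -/
variable {L : Type*}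

/-- A subset `C` of a complete lattice `L` is a connectivity (subchainmail of `L`,
i.e. closed under joins of non-empty subsets of `C` with a lower bound in `C`)
if and only if for every `x`, each element of `C ∩ x^↓` is below a unique maximal
element of `C ∩ x^↓`. -/
theorem connectivity_iff_unique_component [CompleteLattice L] (C : Set L) :
    (∀ M : Set L, M ⊆ C → M.Nonempty → (∃ b ∈ C, ∀ m ∈ M, b ≤ m) → sSup M ∈ C) ↔
    (∀ x : L, ∀ c ∈ C, c ≤ x → ∃! m, m ∈ Comps C x ∧ c ≤ m) := by
  constructor
  · intro h x c hc hcx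
    set M : Set L := {d | d ∈ C ∧ c ≤ d ∧ d ≤ x} with hM
    have hMC : M ⊆ C := fun d hd => hd.1
    have hMne : M.Nonempty := ⟨c, hc, le_refl c, hcx⟩
    have hlb : ∃ b ∈ C, ∀ m ∈ M, b ≤ m := ⟨c, hc, fun m hm => hm.2.1⟩
    have hs : sSup M ∈ C := h M hMC hMne hlb
    have hsx : sSup M ≤ x := sSup_le (fun m hm => hm.2.2)
    have hcs : c ≤ sSup M := le_sSup ⟨hc, le_refl c, hcx⟩
    refine ⟨sSup M, ⟨⟨hs, hsx, ?_⟩, hcs⟩, ?_⟩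
    · intro d hd hdx hsd
      exact le_antisymm hsd (le_sSup ⟨hd, hcs.trans hsd, hdx⟩)
    · rintro m ⟨⟨hmC, hmx, hmax⟩, hcm⟩
      exact hmax _ hs hsx (le_sSup ⟨hmC, hcm, hmx⟩)
  · intro h M hMC hMne hlb
    obtain ⟨b, hbC, hb⟩ := hlb
    obtain ⟨m₁, hm₁⟩ := hMne
    have hbx : b ≤ sSup M := (hb m₁ hm₁).trans (le_sSup hm₁)
    obtain ⟨m₀, ⟨hm₀comp, hbm₀⟩, huniq⟩ := h (sSup M) b hbC hbx
    have hle : ∀ m ∈ M, m ≤ m₀ := by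
      intro m hm
      obtain ⟨m', ⟨hm'comp, hmm'⟩, _⟩ :=
        h (sSup M) m (hMC hm) (le_sSup hm)
      have : m' = m₀ := huniq m' ⟨hm'comp, (hb m hm).trans hmm'⟩
      exact this ▸ hmm'
    have : sSup M = m₀ := le_antisymm (sSup_le hle) hm₀comp.2.1
    exact this ▸ hm₀comp.1
end

section
/- Let L be a complete lattice and C ⊆ L a connectivity. If every nonzero element of L has some element of C below it (well-foundedness), then C satisfies (CL1): the join of any non-empty subset of C having a nonzero lower bound belongs to C. Furthermore, C = L if and only if C is a connectivity containing 0 and every element of L is a join of elements of C. -/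
variable {L : Type*}

/-- If a connectivity `C` is well-founded (every nonzero element has an element of
`C` below it), then `C` satisfies (CL1). Furthermore, `C = L` if and only if `C` is
a connectivity containing `0` and every element of `L` is a join of elements of `C`. -/
theorem wellFounded_CL1_and_degenerate [CompleteLattice L] (C : Set L) :
    ((IsConnectivity C ∧ ∀ x : L, x ≠ ⊥ → ∃ c ∈ C, c ≤ x) →
      ∀ X : Set L, X ⊆ C → X.Nonempty → (∃ b, b ≠ ⊥ ∧ ∀ x ∈ X, b ≤ x) → sSup X ∈ C) ∧
    (C = Set.univ ↔
      (IsConnectivity C ∧ ⊥ ∈ C ∧ ∀ x : L, ∃ X : Set L, X ⊆ C ∧ x = sSup X)) := by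
  constructor
  · rintro ⟨hC, hwf⟩ X hXC hXne ⟨b, hb, hbX⟩
    obtain ⟨c, hcC, hcb⟩ := hwf b hb
    exact hC X hXC hXne ⟨c, hcC, fun m hm => hcb.trans (hbX m hm)⟩
  · constructor
    · rintro rfl
      refine ⟨fun M _ _ _ => Set.mem_univ _, Set.mem_univ _, fun x => ⟨{x}, ?_, ?_⟩⟩
      · exact Set.subset_univ _
      · simp
    · rintro ⟨hC, hbot, hgen⟩
      ext x
      simp only [Set.mem_univ, iff_true]
      obtain ⟨X, hXC, rfl⟩ := hgen x
      rcases X.eq_empty_or_nonempty with rfl | hne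
      · simpa using hbot
      · exact hC X hXC hne ⟨⊥, hbot, fun m _ => bot_le⟩
end

section
/- In a frame, an element a satisfying (E2) — a ≠ 0 and for all x, y with x ∧ y = 0 and a = x ∨ y, either x = a or y = a — also satisfies (E4): for every subset S of nonzero elements in which any two distinct elements meet at 0 (equivalently, have no common nonzero lower bound), if a ≤ ⋁S then a ≤ s for some s ∈ S. Hence conditions (E1)–(E4) are equivalent in a frame. -/
variable {L : Type*}

/-- Condition (E1). -/
def E1 [CompleteLattice L] (a : L) : Prop :=
  a ≠ ⊥ ∧ ∀ x y : L, x ⊓ y = ⊥ → a ≤ x ⊔ y → a ≤ x ∨ a ≤ y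

/-- Condition (E2). -/
def E2 [CompleteLattice L] (a : L) : Prop :=
  a ≠ ⊥ ∧ ∀ x y : L, x ⊓ y = ⊥ → a = x ⊔ y → x = a ∨ y = a

/-- Condition (E3): for every totally mail-disconnected subset `S` of `L \ {0}`
(nonzero elements pairwise meeting at `0`), `a = ⋁S` implies `a ∈ S`. -/
def E3 [CompleteLattice L] (a : L) : Prop :=
  ∀ S : Set L, (∀ s ∈ S, s ≠ ⊥) → (∀ s ∈ S, ∀ t ∈ S, s ≠ t → s ⊓ t = ⊥) →
    a = sSup S → a ∈ S

/-- Condition (E4): for every totally mail-disconnected subset `S` of `L \ {0}`,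
`a ≤ ⋁S` implies `a ≤ s` for some `s ∈ S`. -/
def E4 [CompleteLattice L] (a : L) : Prop :=
  ∀ S : Set L, (∀ s ∈ S, s ≠ ⊥) → (∀ s ∈ S, ∀ t ∈ S, s ≠ t → s ⊓ t = ⊥) →
    a ≤ sSup S → ∃ s ∈ S, a ≤ s

lemma aux_e2_e4 [Order.Frame L] (a : L) (h : E2 a) : E4 a := by
  obtain ⟨ha, hE2⟩ := h
  intro S hne hdisj hle
  have key : a = ⨆ t ∈ S, a ⊓ t := by
    rw [← inf_sSup_eq]
    exact (inf_eq_left.mpr hle).symm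
  obtain ⟨s, hs, hns⟩ : ∃ s ∈ S, a ⊓ s ≠ ⊥ := by
    by_contra h'
    push_neg at h'
    exact ha (key.trans (le_bot_iff.mp (iSup₂_le fun t ht => (h' t ht).le)))
  refine ⟨s, hs, ?_⟩
  set x : L := a ⊓ s with hx
  set y : L := ⨆ t ∈ S \ {s}, a ⊓ t with hy
  have hxy : x ⊓ y = ⊥ := by
    rw [hy, inf_iSup_eq]
    refine le_bot_iff.mp (iSup_le fun t => ?_)
    rw [inf_iSup_eq]
    refine iSup_le fun ht => ?_
    have : s ⊓ t = ⊥ := hdisj s hs t ht.1 (fun e => ht.2 e.symm)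
    calc x ⊓ (a ⊓ t) ≤ s ⊓ t := inf_le_inf inf_le_right inf_le_right
      _ = ⊥ := this
  have hsup : a = x ⊔ y := by
    apply le_antisymm
    · rw [key]
      refine iSup₂_le fun t ht => ?_
      by_cases hts : t = s
      · subst hts; exact le_sup_of_le_left le_rfl
      · exact le_sup_of_le_right (le_iSup₂ (f := fun t _ => a ⊓ t) t ⟨ht, hts⟩)
    · exact sup_le inf_le_left (iSup₂_le fun t _ => inf_le_left)
  rcases hE2 x y hxy hsup with h1 | h1
  · calc a = x := h1.symm
      _ ≤ s := inf_le_right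
  · exfalso
    apply hns
    have : x ≤ y := h1 ▸ (hsup ▸ le_sup_left : x ≤ a)
    rw [← hxy, inf_eq_left.mpr this]

lemma aux_e1_e2 [CompleteLattice L] (a : L) (h : E1 a) : E2 a := by
  obtain ⟨ha, h1⟩ := h
  refine ⟨ha, fun x y hxy heq => ?_⟩
  rcases h1 x y hxy heq.le with h' | h'
  · exact Or.inl (le_antisymm (heq ▸ le_sup_left) h')
  · exact Or.inr (le_antisymm (heq ▸ le_sup_right) h')

lemma aux_e4_ne_bot [CompleteLattice L] (a : L) (h : E4 a) : a ≠ ⊥ := by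
  intro hbot
  obtain ⟨s, hs, -⟩ := h ∅ (by simp) (by simp) (by simp [hbot])
  exact hs

lemma aux_e4_e1 [CompleteLattice L] (a : L) (h : E4 a) : E1 a := by
  refine ⟨aux_e4_ne_bot a h, fun x y hxy hle => ?_⟩
  obtain ⟨s, hs, hle'⟩ := h ({x, y} \ {⊥}) (fun s hs => hs.2)
    (by
      rintro s ⟨hs, -⟩ t ⟨ht, -⟩ hst
      rcases hs with rfl | rfl <;> rcases ht with rfl | rfl
      · exact absurd rfl hst
      · exact hxy
      · rw [inf_comm]; exact hxy
      · exact absurd rfl hst)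
    (by
      refine le_trans hle (sup_le ?_ ?_)
      · by_cases hb : x = ⊥
        · simp [hb]
        · exact le_sSup ⟨by simp, hb⟩
      · by_cases hb : y = ⊥
        · simp [hb]
        · exact le_sSup ⟨by simp, hb⟩)
  rcases hs.1 with rfl | rfl
  · exact Or.inl hle'
  · exact Or.inr hle'

lemma aux_e3_e2 [CompleteLattice L] (a : L) (h : E3 a) : E2 a := by
  have ha : a ≠ ⊥ := by
    intro hbot
    exact h ∅ (by simp) (by simp) (by simp [hbot])
  refine ⟨ha, fun x y hxy heq => ?_⟩
  have hmem : a ∈ ({x, y} \ {⊥} : Set L) := by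
    apply h _ (fun s hs => hs.2)
    · rintro s ⟨hs, -⟩ t ⟨ht, -⟩ hst
      rcases hs with rfl | rfl <;> rcases ht with rfl | rfl
      · exact absurd rfl hst
      · exact hxy
      · rw [inf_comm]; exact hxy
      · exact absurd rfl hst
    · apply le_antisymm
      · refine heq.le.trans (sup_le ?_ ?_)
        · by_cases hb : x = ⊥
          · simp [hb]
          · exact le_sSup ⟨by simp, hb⟩
        · by_cases hb : y = ⊥
          · simp [hb]
          · exact le_sSup ⟨by simp, hb⟩
      · refine sSup_le ?_
        rintro s ⟨(rfl | rfl), -⟩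
        · exact heq ▸ le_sup_left
        · exact heq ▸ le_sup_right
  rcases hmem.1 with h' | h'
  · exact Or.inl h'.symm
  · exact Or.inr h'.symm

lemma aux_e4_e3 [CompleteLattice L] (a : L) (h : E4 a) : E3 a := by
  intro S hne hdisj heq
  obtain ⟨s, hs, hle⟩ := h S hne hdisj heq.le
  have : a = s := le_antisymm hle (heq ▸ le_sSup hs)
  exact this ▸ hs

/-- In a frame, an element satisfying (E2) also satisfies (E4); hence conditions
(E1)–(E4) are equivalent in a frame. -/
theorem frame_E2_implies_E4 [Order.Frame L] (a : L) :
    (E2 a → E4 a) ∧ (E1 a ↔ E4 a) ∧ (E2 a ↔ E4 a) ∧ (E3 a ↔ E4 a) := by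
  refine ⟨aux_e2_e4 a, ⟨fun h => aux_e2_e4 a (aux_e1_e2 a h), aux_e4_e1 a⟩,
    ⟨aux_e2_e4 a, fun h => aux_e1_e2 a (aux_e4_e1 a h)⟩,
    ⟨fun h => aux_e2_e4 a (aux_e3_e2 a h), aux_e4_e3 a⟩⟩
end

section
/- Let L be a complete lattice and C the set of absolutely connected elements of L (elements a satisfying (E4): for every totally mail-disconnected subset S of L\{0}, a ≤ ⋁S implies a ≤ s for some s ∈ S). Then 0 ∉ C and C satisfies (CL1): the join of every non-empty subset of C having a nonzero lower bound belongs to C. -/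
variable {L : Type*}

/-- An absolutely connected element: condition (E4). For every subset `S` of
`L \ {0}` in which no two distinct elements have a common nonzero lower bound,
`a ≤ ⋁S` implies `a ≤ s` for some `s ∈ S`. -/
def AbsConn [CompleteLattice L] (a : L) : Prop :=
  ∀ S : Set L, (∀ s ∈ S, s ≠ ⊥) →
    (∀ s ∈ S, ∀ t ∈ S, s ≠ t → ¬∃ c, c ≠ ⊥ ∧ c ≤ s ∧ c ≤ t) →
    a ≤ sSup S → ∃ s ∈ S, a ≤ s

/-- For the set `C` of absolutely connected elements of a complete lattice `L`:
`0 ∉ C` and `C` satisfies (CL1) — the join of every non-empty subset of `C` having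
a nonzero lower bound belongs to `C`. -/
theorem absConn_typicalConnectivity [CompleteLattice L] :
    (⊥ ∉ {a : L | AbsConn a}) ∧
    (∀ X : Set L, X ⊆ {a : L | AbsConn a} → X.Nonempty →
      (∃ b, b ≠ ⊥ ∧ ∀ x ∈ X, b ≤ x) → sSup X ∈ {a : L | AbsConn a}) := by
  constructor
  · intro h
    obtain ⟨s, hs, -⟩ := h ∅ (by simp) (by simp) (by simp)
    exact hs
  · rintro X hXC ⟨x₀, hx₀⟩ ⟨b, hb, hbX⟩
    intro S hS hdisc hle
    -- each x ∈ X is ≤ some s ∈ S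
    have key : ∀ x ∈ X, ∃ s ∈ S, x ≤ s := fun x hx =>
      hXC hx S hS hdisc ((le_sSup hx).trans hle)
    obtain ⟨s, hsS, hx₀s⟩ := key x₀ hx₀
    refine ⟨s, hsS, sSup_le fun x hx => ?_⟩
    obtain ⟨t, htS, hxt⟩ := key x hx
    rcases eq_or_ne s t with rfl | hst
    · exact hxt
    · exact absurd ⟨b, hb, (hbX x₀ hx₀).trans hx₀s, (hbX x hx).trans hxt⟩
        (hdisc s hsS t htS hst)
end

section
/- In an absolute connectivity lattice L, every element a satisfying (E2) (a ≠ 0 and x ∧ y = 0 with a = x ∨ y implies x = a or y = a) is absolutely connected (satisfies (E4)). -/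
variable {L : Type*}

lemma AbsConn.ne_bot [CompleteLattice L] {x : L} (h : AbsConn x) : x ≠ ⊥ := by
  intro hx
  obtain ⟨s, hs, -⟩ := h ∅ (by simp) (by simp) (by simp [hx])
  exact hs

/-- In an absolute connectivity lattice (every element is a join of absolutely
connected elements, and every totally mail-disconnected subset `X` of the set `C`
of absolutely connected elements satisfies `X = C(⋁X)`), every element `a`
satisfying (E2) is absolutely connected. -/
theorem absolute_E2_implies_absConn [CompleteLattice L]
    (hjoin : ∀ x : L, ∃ X : Set L, X ⊆ {a : L | AbsConn a} ∧ x = sSup X)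
    (hsep : ∀ X : Set L, X ⊆ {a : L | AbsConn a} →
      (∀ a ∈ X, ∀ b ∈ X, a ≠ b → ¬∃ c, AbsConn c ∧ c ≤ a ∧ c ≤ b) →
      X = Comps {a : L | AbsConn a} (sSup X))
    (a : L) (ha : a ≠ ⊥)
    (hE2 : ∀ x y : L, x ⊓ y = ⊥ → a = x ⊔ y → x = a ∨ y = a) :
    AbsConn a := by
  intro S hS0 hSdis haS
  obtain ⟨X, hXC, hXa⟩ := hjoin a
  -- every element of X lies below some member of S
  have hx_s : ∀ x ∈ X, ∃ s ∈ S, x ≤ s := by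
    intro x hx
    exact hXC hx S hS0 hSdis (le_trans (le_trans (le_sSup hx) hXa.ge) haS)
  -- X is nonempty
  have hXne : X.Nonempty := by
    rcases Set.eq_empty_or_nonempty X with h | h
    · exact absurd (by simp [hXa, h]) ha
    · exact h
  obtain ⟨x₀, hx₀⟩ := hXne
  obtain ⟨s₀, hs₀S, hx₀s₀⟩ := hx_s x₀ hx₀
  -- the restricted family S \ {s₀} keeps the hypotheses
  have hS0' : ∀ s ∈ S \ {s₀}, s ≠ ⊥ := fun s hs => hS0 s hs.1
  have hSdis' : ∀ s ∈ S \ {s₀}, ∀ t ∈ S \ {s₀}, s ≠ t →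
      ¬∃ c, c ≠ ⊥ ∧ c ≤ s ∧ c ≤ t := fun s hs t ht hst => hSdis s hs.1 t ht.1 hst
  set X₁ : Set L := {x ∈ X | x ≤ s₀} with hX₁
  set X₂ : Set L := {x ∈ X | ¬ x ≤ s₀} with hX₂
  have hsplit : a = sSup X₁ ⊔ sSup X₂ := by
    rw [← sSup_union]
    have : X₁ ∪ X₂ = X := by
      ext x; by_cases h : x ≤ s₀ <;> simp [hX₁, hX₂, h]
    rw [this, hXa]
  have hu : sSup X₁ ≤ s₀ := sSup_le fun x hx => hx.2
  have hv : sSup X₂ ≤ sSup (S \ {s₀}) := by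
    apply sSup_le
    intro x hx
    obtain ⟨s, hsS, hxs⟩ := hx_s x hx.1
    have hne : s ≠ s₀ := fun h => hx.2 (h ▸ hxs)
    exact le_trans hxs (le_sSup ⟨hsS, hne⟩)
  have hmeet : sSup X₁ ⊓ sSup X₂ = ⊥ := by
    by_contra hc
    obtain ⟨Y, hYC, hYc⟩ := hjoin (sSup X₁ ⊓ sSup X₂)
    have hYne : Y.Nonempty := by
      rcases Set.eq_empty_or_nonempty Y with h | h
      · exact absurd (by simp [hYc, h]) hc
      · exact h
    obtain ⟨d, hd⟩ := hYne
    have hdC : AbsConn d := hYC hd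
    have hdle : d ≤ sSup X₁ ⊓ sSup X₂ := hYc ▸ le_sSup hd
    have hds₀ : d ≤ s₀ := le_trans (le_trans hdle inf_le_left) hu
    have hdv : d ≤ sSup (S \ {s₀}) := le_trans (le_trans hdle inf_le_right) hv
    obtain ⟨s₁, hs₁, hds₁⟩ := hdC (S \ {s₀}) hS0' hSdis' hdv
    exact hSdis s₀ hs₀S s₁ hs₁.1 (fun h => hs₁.2 h.symm) ⟨d, hdC.ne_bot, hds₀, hds₁⟩
  rcases hE2 _ _ hmeet hsplit with h1 | h2
  · exact ⟨s₀, hs₀S, h1 ▸ hu⟩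
  · exfalso
    have hx₀C : AbsConn x₀ := hXC hx₀
    have hx₀v : x₀ ≤ sSup (S \ {s₀}) :=
      le_trans (le_trans (le_sSup hx₀) hXa.ge) (h2 ▸ hv)
    obtain ⟨s₁, hs₁, hx₀s₁⟩ := hx₀C (S \ {s₀}) hS0' hSdis' hx₀v
    exact hSdis s₀ hs₀S s₁ hs₁.1 (fun h => hs₁.2 h.symm)
      ⟨x₀, hx₀C.ne_bot, hx₀s₀, hx₀s₁⟩
end

section
/- For a chainmail Γ, the exterior D(Γ) is an absolute connectivity lattice whose absolutely connected elements are exactly the singletons {x} for x ∈ Γ; consequently the poset of absolutely connected elements of D(Γ) is isomorphic to Γ. -/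
variable {α : Type*}

/-- The exterior `D(Γ)`: the collection of totally mail-disconnected subsets of `Γ`. -/
def DExt (α : Type*) [Preorder α] := {S : Set α // TMD S}

/-- The order on the exterior: `S₁ ≤ S₂` when each element of `S₁` is below some
element of `S₂`. -/
instance [PartialOrder α] : PartialOrder (DExt α) where
  le S T := ∀ a ∈ S.1, ∃ b ∈ T.1, a ≤ b
  le_refl S a ha := ⟨a, ha, le_refl a⟩
  le_trans S T U h1 h2 a ha := by
    obtain ⟨b, hb, hab⟩ := h1 a ha
    obtain ⟨c, hc, hbc⟩ := h2 b hb
    exact ⟨c, hc, le_trans hab hbc⟩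
  le_antisymm S T h1 h2 := by
    apply Subtype.ext
    apply Set.eq_of_subset_of_subset
    · intro a ha
      obtain ⟨b, hb, hab⟩ := h1 a ha
      obtain ⟨c, hc, hbc⟩ := h2 b hb
      have hac : a = c := by
        by_contra hne
        exact S.2 a ha c hc hne ⟨a, le_refl a, le_trans hab hbc⟩
      have hab' : a = b := le_antisymm hab (hac ▸ hbc)
      exact hab' ▸ hb
    · intro a ha
      obtain ⟨b, hb, hab⟩ := h2 a ha
      obtain ⟨c, hc, hbc⟩ := h1 b hb
      have hac : a = c := by
        by_contra hne
        exact T.2 a ha c hc hne ⟨a, le_refl a, le_trans hab hbc⟩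
      have hab' : a = b := le_antisymm hab (hac ▸ hbc)
      exact hab' ▸ hb

/-- The bottom element of the exterior: the empty set. -/
def extBot (α : Type*) [PartialOrder α] : DExt α :=
  ⟨∅, fun a ha => absurd ha (Set.notMem_empty a)⟩

/-- An absolutely connected element of the exterior: for every family `𝒮` of
nonzero elements, no two distinct of which have a common nonzero lower bound,
if `a` is below a least upper bound of `𝒮` then `a` is below a member of `𝒮`. -/
def AbsConnE [PartialOrder α] (a : DExt α) : Prop :=
  ∀ 𝒮 : Set (DExt α), (∀ s ∈ 𝒮, s ≠ extBot α) →
    (∀ s ∈ 𝒮, ∀ t ∈ 𝒮, s ≠ t → ¬∃ c : DExt α, c ≠ extBot α ∧ c ≤ s ∧ c ≤ t) →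
    ∀ j : DExt α, IsLUB 𝒮 j → a ≤ j → ∃ s ∈ 𝒮, a ≤ s

/-- The maximal absolutely connected elements of the exterior below `y`. -/
def CompsE [PartialOrder α] (y : DExt α) : Set (DExt α) :=
  {c | AbsConnE c ∧ c ≤ y ∧ ∀ d : DExt α, AbsConnE d → d ≤ y → c ≤ d → c = d}

/-!
A point `x` of `Γ` gives the singleton `{x}` in `D(Γ)`, and every element of `D(Γ)` is the join of
the singletons of its points. If no point lies below members of two distinct sets of a family,
its union is again totally mail-disconnected and is its join; since a singleton below a union
is below one of the sets, singletons are absolutely connected. Conversely, an absolutely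
connected `a` is below one of the singletons into which it decomposes, and total
disconnectedness forces `a` to be that singleton. The maximal singletons below `y` are then
the singletons of the points of `y`, which gives `X = C(⋁X)`.
-/

section

variable [PartialOrder α]

theorem TMD.eq_of_le {S : Set α} (hS : TMD S) {a b : α} (ha : a ∈ S) (hb : b ∈ S)
    (hab : a ≤ b) : a = b := by
  by_contra hne
  exact hS a ha b hb hne ⟨a, le_rfl, hab⟩

namespace DExt

def single (x : α) : DExt α :=
  ⟨{x}, by rintro a rfl b rfl hne; exact absurd rfl hne⟩

theorem single_le_iff {x : α} {T : DExt α} : single x ≤ T ↔ ∃ b ∈ T.1, x ≤ b :=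
  ⟨fun h => h x rfl, by rintro ⟨b, hb, hxb⟩ a rfl; exact ⟨b, hb, hxb⟩⟩

theorem le_single_iff {S : DExt α} {x : α} : S ≤ single x ↔ ∀ a ∈ S.1, a ≤ x :=
  ⟨fun h a ha => by obtain ⟨b, rfl, hab⟩ := h a ha; exact hab, fun h a ha => ⟨x, rfl, h a ha⟩⟩

theorem single_le_single {x y : α} : single x ≤ single y ↔ x ≤ y :=
  single_le_iff.trans ⟨by rintro ⟨b, rfl, h⟩; exact h, fun h => ⟨y, rfl, h⟩⟩

theorem single_ne_bot (x : α) : single x ≠ extBot α :=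
  fun h => Set.singleton_ne_empty x (congrArg Subtype.val h)

theorem nonempty_of_ne_bot {S : DExt α} (h : S ≠ extBot α) : S.1.Nonempty :=
  Set.nonempty_iff_ne_empty.2 fun hS => h (Subtype.ext hS)

def sUnion (𝒮 : Set (DExt α))
    (h : 𝒮.Pairwise fun s t => ∀ c : α, ¬(single c ≤ s ∧ single c ≤ t)) : DExt α :=
  ⟨⋃ s ∈ 𝒮, s.1, by
    intro a ha b hb hne ⟨c, hca, hcb⟩
    obtain ⟨s, hs, has⟩ := Set.mem_iUnion₂.1 ha
    obtain ⟨t, ht, hbt⟩ := Set.mem_iUnion₂.1 hb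
    rcases eq_or_ne s t with rfl | hst
    · exact s.2 a has b hbt hne ⟨c, hca, hcb⟩
    · exact h hs ht hst c ⟨single_le_iff.2 ⟨a, has, hca⟩, single_le_iff.2 ⟨b, hbt, hcb⟩⟩⟩

section sUnion

variable {𝒮 : Set (DExt α)} (h : 𝒮.Pairwise fun s t => ∀ c : α, ¬(single c ≤ s ∧ single c ≤ t))
include h

theorem isLUB_sUnion : IsLUB 𝒮 (sUnion 𝒮 h) := by
  refine ⟨fun s hs a ha => ⟨a, Set.mem_biUnion hs ha, le_rfl⟩, fun u hu a ha => ?_⟩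
  obtain ⟨s, hs, has⟩ := Set.mem_iUnion₂.1 ha
  exact hu hs a has

theorem single_le_sUnion_iff {x : α} : single x ≤ sUnion 𝒮 h ↔ ∃ s ∈ 𝒮, single x ≤ s := by
  rw [single_le_iff]
  constructor
  · rintro ⟨b, hb, hxb⟩
    obtain ⟨s, hs, hbs⟩ := Set.mem_iUnion₂.1 hb
    exact ⟨s, hs, single_le_iff.2 ⟨b, hbs, hxb⟩⟩
  · rintro ⟨s, hs, hxs⟩
    obtain ⟨b, hb, hxb⟩ := single_le_iff.1 hxs
    exact ⟨b, Set.mem_biUnion hs hb, hxb⟩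

end sUnion

theorem absConnE_single (x : α) : AbsConnE (single x) := by
  intro 𝒮 _ hdisj j hj hxj
  have h : 𝒮.Pairwise fun s t => ∀ c : α, ¬(single c ≤ s ∧ single c ≤ t) :=
    fun s hs t ht hst c hc => hdisj s hs t ht hst ⟨single c, single_ne_bot c, hc⟩
  rw [hj.unique (isLUB_sUnion h)] at hxj
  exact (single_le_sUnion_iff h).1 hxj

theorem isLUB_image_single (a : DExt α) : IsLUB (single '' a.1) a := by
  refine ⟨?_, fun u hu y hy => single_le_iff.1 (hu ⟨y, hy, rfl⟩)⟩
  rintro _ ⟨x, hx, rfl⟩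
  exact single_le_iff.2 ⟨x, hx, le_rfl⟩

theorem absConnE_iff {a : DExt α} : AbsConnE a ↔ ∃ x, a = single x := by
  refine ⟨fun ha => ?_, by rintro ⟨x, rfl⟩; exact absConnE_single x⟩
  have hdisj : ∀ s ∈ single '' a.1, ∀ t ∈ single '' a.1, s ≠ t →
      ¬∃ c : DExt α, c ≠ extBot α ∧ c ≤ s ∧ c ≤ t := by
    rintro _ ⟨x, hx, rfl⟩ _ ⟨y, hy, rfl⟩ hxy ⟨c, hc, hcx, hcy⟩
    obtain ⟨u, hu⟩ := nonempty_of_ne_bot hc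
    exact a.2 x hx y hy (fun h => hxy (congrArg single h))
      ⟨u, le_single_iff.1 hcx u hu, le_single_iff.1 hcy u hu⟩
  obtain ⟨_, ⟨x, hx, rfl⟩, hax⟩ :=
    ha _ (by rintro _ ⟨x, -, rfl⟩; exact single_ne_bot x) hdisj a (isLUB_image_single a) le_rfl
  refine ⟨x, Subtype.ext (Set.eq_singleton_iff_unique_mem.2 ⟨hx, fun y hy => ?_⟩)⟩
  exact a.2.eq_of_le hy hx (le_single_iff.1 hax y hy)

theorem compsE_eq_image_single (j : DExt α) : CompsE j = single '' j.1 := by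
  ext c
  simp only [CompsE, Set.mem_ofPred_eq, absConnE_iff]
  constructor
  · rintro ⟨⟨x, rfl⟩, hxj, hmax⟩
    obtain ⟨b, hb, hxb⟩ := single_le_iff.1 hxj
    rw [hmax (single b) ⟨b, rfl⟩ (single_le_iff.2 ⟨b, hb, le_rfl⟩) (single_le_single.2 hxb)]
    exact Set.mem_image_of_mem single hb
  · rintro ⟨x, hx, rfl⟩
    refine ⟨⟨x, rfl⟩, single_le_iff.2 ⟨x, hx, le_rfl⟩, ?_⟩
    rintro _ ⟨z, rfl⟩ hzj hxz
    obtain ⟨b, hb, hzb⟩ := single_le_iff.1 hzj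
    have hxb : x = b := j.2.eq_of_le hx hb (le_trans (single_le_single.1 hxz) hzb)
    rw [le_antisymm (single_le_single.1 hxz) (hxb ▸ hzb)]

theorem image_single_biUnion {X : Set (DExt α)} (hX : X ⊆ Set.range single) :
    single '' (⋃ s ∈ X, s.1) = X := by
  ext c
  simp only [Set.mem_image, Set.mem_iUnion, exists_prop]
  constructor
  · rintro ⟨x, ⟨s, hs, hx⟩, rfl⟩
    obtain ⟨y, rfl⟩ := hX hs
    rwa [show x = y from hx]
  · intro hc
    obtain ⟨x, rfl⟩ := hX hc
    exact ⟨x, ⟨single x, hc, rfl⟩, rfl⟩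

theorem range_single : Set.range (single : α → DExt α) = {a | AbsConnE a} := by
  ext a
  simp [absConnE_iff, eq_comm]

def singleOrderEmb : α ↪o DExt α :=
  OrderEmbedding.ofMapLEIff single fun _ _ => single_le_single

end DExt

end

open DExt

theorem exterior_absolute_connectivity_general [PartialOrder α] :
    (∀ a : DExt α, AbsConnE a ↔ ∃ x : α, a.1 = {x}) ∧
    (∀ a : DExt α, ∃ 𝒮 : Set (DExt α), 𝒮 ⊆ {b | AbsConnE b} ∧ IsLUB 𝒮 a) ∧
    (∀ X : Set (DExt α), X ⊆ {b | AbsConnE b} →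
      (∀ a ∈ X, ∀ b ∈ X, a ≠ b → ¬∃ c : DExt α, AbsConnE c ∧ c ≤ a ∧ c ≤ b) →
      ∀ j : DExt α, IsLUB X j → X = CompsE j) ∧
    Nonempty (α ≃o {a : DExt α // AbsConnE a}) := by
  refine ⟨fun a => absConnE_iff.trans (exists_congr fun _ => Subtype.ext_iff), fun a => ?_,
    fun X hX hdisj j hj => ?_, ?_⟩
  · exact ⟨single '' a.1, (Set.image_subset_range _ _).trans range_single.subset,
      isLUB_image_single a⟩
  · have h : X.Pairwise fun s t => ∀ c : α, ¬(single c ≤ s ∧ single c ≤ t) :=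
      fun s hs t ht hst c hc => hdisj s hs t ht hst ⟨single c, absConnE_single c, hc⟩
    rw [hj.unique (isLUB_sUnion h), compsE_eq_image_single]
    exact (image_single_biUnion (hX.trans range_single.superset)).symm
  · exact ⟨(singleOrderEmb (α := α)).orderIso.trans (OrderIso.setCongr _ _ range_single)⟩

/-- For a chainmail `Γ`, the exterior `D(Γ)` is an absolute connectivity lattice
whose absolutely connected elements are exactly the singletons `{x}` for `x ∈ Γ`;
consequently, the poset of absolutely connected elements of `D(Γ)` is isomorphic
to `Γ`. -/
theorem exterior_absolute_connectivity [PartialOrder α]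
    (hΓ : ∀ M : Set α, M.Nonempty → (∃ b, ∀ m ∈ M, b ≤ m) → ∃ j, IsLUB M j) :
    (∀ a : DExt α, AbsConnE a ↔ ∃ x : α, a.1 = {x}) ∧
    (∀ a : DExt α, ∃ 𝒮 : Set (DExt α), 𝒮 ⊆ {b | AbsConnE b} ∧ IsLUB 𝒮 a) ∧
    (∀ X : Set (DExt α), X ⊆ {b | AbsConnE b} →
      (∀ a ∈ X, ∀ b ∈ X, a ≠ b → ¬∃ c : DExt α, AbsConnE c ∧ c ≤ a ∧ c ≤ b) →
      ∀ j : DExt α, IsLUB X j → X = CompsE j) ∧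
    Nonempty (α ≃o {a : DExt α // AbsConnE a}) :=
  exterior_absolute_connectivity_general
end
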